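/- (Convergence) For every finite simple graph G, integer h ≥ 1, and edge e of G, the sequence (H^(n)sup(e))_{n≥0} converges to t(e,h) − 2: there exists N such that for all n ≥ N, H^(n)sup(e) = t(e,h) − 2, where t(e,h) is the h-trussness of e. -/

import Mathlib

/-- The H-index of a finite multiset of natural numbers: the largest `y` such that
at least `y` elements of the multiset are `≥ y` (`0` for the empty multiset). -/
noncomputable def hIndex (S : Multiset ℕ) : ℕ :=
  sSup {y : ℕ | y ≤ (S.filter (fun x => y ≤ x)).card}

/-- The set of common `h`-neighbors of an edge `e` in `G`: the vertices `w`, distinct from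
both endpoints of `e`, that are within distance `h` (i.e. joined by a walk of length `≤ h`)
of both endpoints of `e`. -/
def commonHNbrs {V : Type*} (G : SimpleGraph V) (h : ℕ) (e : Sym2 V) : Set V :=
  {w | ∀ x ∈ e, w ≠ x ∧ ∃ p : G.Walk x w, p.length ≤ h}

/-- The `h`-support of an edge `e` in `G`: the number of common `h`-neighbors of `e`. -/
noncomputable def hSupport {V : Type*} (G : SimpleGraph V) (h : ℕ) (e : Sym2 V) : ℕ :=
  (commonHNbrs G h e).ncard

/-- The `h`-hop reachable path key of `a, b` with respect to an edge-value function `F`: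
the maximum over all (nontrivial) paths `p` from `a` to `b` of length `≤ h` of the minimum
of `F` over the edges of `p`. -/
noncomputable def pathKey {V : Type*} (G : SimpleGraph V) (h : ℕ) (F : Sym2 V → ℕ)
    (a b : V) : ℕ :=
  sSup {m | ∃ p : G.Walk a b, 0 < p.length ∧ p.length ≤ h ∧
    m = sInf {x | ∃ f ∈ p.edges, x = F f}}

/-- For an edge `e = (u,v)` and a vertex `w`, the value `min (P(u,w), P(v,w))` where `P`
is the path key with respect to `F`. -/
noncomputable def edgeKey {V : Type*} (G : SimpleGraph V) (h : ℕ) (F : Sym2 V → ℕ)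
    (e : Sym2 V) (w : V) : ℕ :=
  sInf {m | ∃ x ∈ e, m = pathKey G h F x w}

/-- The higher-order H-index iterates: `HSup G h 0 e = hSupport G h e`, and
`HSup G h (n+1) e = H({min (P(u,w), P(v,w)) : w a common h-neighbor of e})` where `P` is
the path key with respect to `HSup G h n`. -/
noncomputable def HSup {V : Type*} [Fintype V] (G : SimpleGraph V) (h : ℕ) :
    ℕ → Sym2 V → ℕ
  | 0 => fun e => hSupport G h e
  | n + 1 => fun e =>
      hIndex ((commonHNbrs G h e).toFinite.toFinset.val.map (edgeKey G h (HSup G h n) e))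

/-- A graph `S` satisfies the `(k,h)`-truss property if every edge of `S` has `h`-support
at least `k - 2`, computed within `S`. -/
def KHTrussProp {V : Type*} (S : SimpleGraph V) (h k : ℕ) : Prop :=
  ∀ e ∈ S.edgeSet, k ≤ hSupport S h e + 2

/-- `S` is the `(k,h)`-truss of `G`: a maximal subgraph of `G` each of whose edges has
`h`-support at least `k-2` within `S`. -/
def IsKHTruss {V : Type*} (G S : SimpleGraph V) (h k : ℕ) : Prop :=
  S ≤ G ∧ KHTrussProp S h k ∧
    ∀ T : SimpleGraph V, T ≤ G → KHTrussProp T h k → S ≤ T → T = S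

/-- The `h`-trussness `t(e,h)` of an edge `e` of `G`: the largest `k` such that some
`(k,h)`-truss of `G` contains `e`. -/
noncomputable def hTrussness {V : Type*} (G : SimpleGraph V) (h : ℕ) (e : Sym2 V) : ℕ :=
  sSup {k | ∃ S : SimpleGraph V, IsKHTruss G S h k ∧ e ∈ S.edgeSet}

/-! ### Auxiliary lemmas -/

section HIndexLemmas

lemma hIndex_bddAbove (S : Multiset ℕ) :
    BddAbove {y : ℕ | y ≤ (S.filter (fun x => y ≤ x)).card} :=
  ⟨Multiset.card S, fun y hy =>
    le_trans hy (Multiset.card_le_card (Multiset.filter_le _ _))⟩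

lemma hIndex_set_nonempty (S : Multiset ℕ) :
    {y : ℕ | y ≤ (S.filter (fun x => y ≤ x)).card}.Nonempty :=
  ⟨0, Nat.zero_le _⟩

lemma hIndex_le_card (S : Multiset ℕ) : hIndex S ≤ Multiset.card S :=
  csSup_le (hIndex_set_nonempty S)
    (fun y hy => le_trans hy (Multiset.card_le_card (Multiset.filter_le _ _)))

lemma le_hIndex (S : Multiset ℕ) (y : ℕ) (hy : y ≤ (S.filter (fun x => y ≤ x)).card) :
    y ≤ hIndex S :=
  le_csSup (hIndex_bddAbove S) hy

lemma hIndex_spec (S : Multiset ℕ) (y : ℕ) (hy : y ≤ hIndex S) :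
    y ≤ (S.filter (fun x => y ≤ x)).card := by
  have hmem := Nat.sSup_mem (hIndex_set_nonempty S) (hIndex_bddAbove S)
  have hmem' : hIndex S ≤ (S.filter (fun x => hIndex S ≤ x)).card := hmem
  calc y ≤ hIndex S := hy
    _ ≤ (S.filter (fun x => hIndex S ≤ x)).card := hmem'
    _ ≤ (S.filter (fun x => y ≤ x)).card :=
        Multiset.card_le_card
          (Multiset.monotone_filter_right S (fun b hb => le_trans hy hb))

lemma card_filter_le_card_filter {α : Type*} {p q : α → Prop}
    [DecidablePred p] [DecidablePred q] (S : Multiset α) (h : ∀ a ∈ S, p a → q a) :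
    (S.filter p).card ≤ (S.filter q).card := by
  induction S using Multiset.induction_on with
  | empty => simp
  | cons a s ih =>
    have ih' := ih (fun x hx => h x (Multiset.mem_cons_of_mem hx))
    rw [Multiset.filter_cons, Multiset.filter_cons, Multiset.card_add, Multiset.card_add]
    have hcard : (if p a then ({a} : Multiset α) else 0).card ≤
        (if q a then ({a} : Multiset α) else 0).card := by
      by_cases hp : p a
      · have hq : q a := h a (Multiset.mem_cons_self a s) hp
        simp [hp, hq]
      · simp only [hp, if_false, Multiset.card_zero]
        exact Nat.zero_le _
    omega

lemma hIndex_map_mono {α : Type*} (S : Multiset α) (g g' : α → ℕ)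
    (hg : ∀ a ∈ S, g a ≤ g' a) : hIndex (S.map g) ≤ hIndex (S.map g') := by
  set c := hIndex (S.map g) with hc
  apply le_hIndex
  have h1 : c ≤ ((S.map g).filter (fun x => c ≤ x)).card := hIndex_spec _ _ le_rfl
  rw [← Multiset.countP_eq_card_filter, Multiset.countP_map] at h1 ⊢
  exact le_trans h1 (card_filter_le_card_filter S
    (fun a ha hga => le_trans hga (hg a ha)))

end HIndexLemmas

section GraphLemmas

variable {V : Type*}

lemma commonHNbrs_mono {S G : SimpleGraph V} (hSG : S ≤ G) (h : ℕ) (e : Sym2 V) :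
    commonHNbrs S h e ⊆ commonHNbrs G h e := by
  intro w hw x hx
  obtain ⟨hne, p, hp⟩ := hw x hx
  exact ⟨hne, p.transfer G (fun f hf => SimpleGraph.edgeSet_mono hSG
    (p.edges_subset_edgeSet hf)), by rwa [SimpleGraph.Walk.length_transfer]⟩

lemma hSupport_mono [Finite V] {S G : SimpleGraph V} (hSG : S ≤ G) (h : ℕ) (e : Sym2 V) :
    hSupport S h e ≤ hSupport G h e :=
  Set.ncard_le_ncard (commonHNbrs_mono hSG h e) (Set.toFinite _)

lemma pathKey_bddAbove (G : SimpleGraph V) (h : ℕ) (F : Sym2 V → ℕ) (a b : V)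
    (B : ℕ) (hB : ∀ f, F f ≤ B) :
    BddAbove {m | ∃ p : G.Walk a b, 0 < p.length ∧ p.length ≤ h ∧
      m = sInf {x | ∃ f ∈ p.edges, x = F f}} := by
  refine ⟨B, ?_⟩
  rintro m ⟨p, h0, hl, rfl⟩
  obtain ⟨f0, hf0⟩ : ∃ f, f ∈ p.edges := by
    refine List.exists_mem_of_ne_nil _ (List.length_pos_iff.mp ?_)
    rwa [SimpleGraph.Walk.length_edges]
  have hne : {x | ∃ f ∈ p.edges, x = F f}.Nonempty := ⟨F f0, f0, hf0, rfl⟩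
  obtain ⟨f, hf, hfx⟩ := Nat.sInf_mem hne
  rw [hfx]
  exact hB f

lemma exists_bound (F : Sym2 V → ℕ) [Finite V] : ∃ B, ∀ f, F f ≤ B := by
  have : (Set.range F).Finite := Set.finite_range F
  obtain ⟨B, hB⟩ := this.bddAbove
  exact ⟨B, fun f => hB ⟨f, rfl⟩⟩

lemma le_pathKey_of_walk [Finite V] {G : SimpleGraph V} {h : ℕ} {F : Sym2 V → ℕ}
    {a b : V} (p : G.Walk a b) (h0 : 0 < p.length) (hl : p.length ≤ h)
    (c : ℕ) (hc : ∀ f ∈ p.edges, c ≤ F f) : c ≤ pathKey G h F a b := by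
  obtain ⟨B, hB⟩ := exists_bound F
  obtain ⟨f0, hf0⟩ : ∃ f, f ∈ p.edges := by
    refine List.exists_mem_of_ne_nil _ (List.length_pos_iff.mp ?_)
    rwa [SimpleGraph.Walk.length_edges]
  have hne : {x | ∃ f ∈ p.edges, x = F f}.Nonempty := ⟨F f0, f0, hf0, rfl⟩
  have h1 : c ≤ sInf {x | ∃ f ∈ p.edges, x = F f} := by
    apply le_csInf hne
    rintro x ⟨f, hf, rfl⟩
    exact hc f hf
  exact le_trans h1 (le_csSup (pathKey_bddAbove G h F a b B hB) ⟨p, h0, hl, rfl⟩)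

lemma pathKey_attained [Finite V] {G : SimpleGraph V} {h : ℕ} {F : Sym2 V → ℕ}
    {a b : V} (hpos : 0 < pathKey G h F a b) :
    ∃ p : G.Walk a b, 0 < p.length ∧ p.length ≤ h ∧
      ∀ f ∈ p.edges, pathKey G h F a b ≤ F f := by
  obtain ⟨B, hB⟩ := exists_bound F
  have hne : {m | ∃ p : G.Walk a b, 0 < p.length ∧ p.length ≤ h ∧
      m = sInf {x | ∃ f ∈ p.edges, x = F f}}.Nonempty := by
    by_contra hcon
    rw [Set.not_nonempty_iff_eq_empty] at hcon
    have : pathKey G h F a b = 0 := by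
      unfold pathKey; rw [hcon]; exact csSup_empty
    omega
  have hmem := Nat.sSup_mem hne (pathKey_bddAbove G h F a b B hB)
  obtain ⟨p, h0, hl, hEq⟩ := hmem
  refine ⟨p, h0, hl, fun f hf => ?_⟩
  have : sInf {x | ∃ f ∈ p.edges, x = F f} ≤ F f := Nat.sInf_le ⟨f, hf, rfl⟩
  calc pathKey G h F a b = sInf {x | ∃ f ∈ p.edges, x = F f} := hEq
    _ ≤ F f := this

lemma pathKey_mono [Finite V] {G : SimpleGraph V} {h : ℕ} {F F' : Sym2 V → ℕ}
    (hF : ∀ f ∈ G.edgeSet, F f ≤ F' f) (a b : V) :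
    pathKey G h F a b ≤ pathKey G h F' a b := by
  rcases Nat.eq_zero_or_pos (pathKey G h F a b) with h0 | hpos
  · omega
  · obtain ⟨p, hp0, hpl, hpe⟩ := pathKey_attained hpos
    exact le_pathKey_of_walk p hp0 hpl _ (fun f hf =>
      le_trans (hpe f hf) (hF f (p.edges_subset_edgeSet hf)))

lemma edgeKey_set_nonempty (G : SimpleGraph V) (h : ℕ) (F : Sym2 V → ℕ)
    (e : Sym2 V) (w : V) :
    {m | ∃ x ∈ e, m = pathKey G h F x w}.Nonempty :=
  ⟨pathKey G h F (Quot.out e).1 w, (Quot.out e).1, Sym2.out_fst_mem e, rfl⟩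

lemma edgeKey_le_pathKey (G : SimpleGraph V) (h : ℕ) (F : Sym2 V → ℕ)
    (e : Sym2 V) (w : V) {x : V} (hx : x ∈ e) :
    edgeKey G h F e w ≤ pathKey G h F x w :=
  Nat.sInf_le ⟨x, hx, rfl⟩

lemma le_edgeKey (G : SimpleGraph V) (h : ℕ) (F : Sym2 V → ℕ) (e : Sym2 V) (w : V)
    (c : ℕ) (hc : ∀ x ∈ e, c ≤ pathKey G h F x w) : c ≤ edgeKey G h F e w := by
  apply le_csInf (edgeKey_set_nonempty G h F e w)
  rintro m ⟨x, hx, rfl⟩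
  exact hc x hx

lemma edgeKey_mono [Finite V] {G : SimpleGraph V} {h : ℕ} {F F' : Sym2 V → ℕ}
    (hF : ∀ f ∈ G.edgeSet, F f ≤ F' f) (e : Sym2 V) (w : V) :
    edgeKey G h F e w ≤ edgeKey G h F' e w := by
  apply le_edgeKey
  intro x hx
  exact le_trans (edgeKey_le_pathKey G h F e w hx) (pathKey_mono hF x w)

end GraphLemmas

section TrussLemmas

variable {V : Type*} [Fintype V]

lemma exists_maximal_truss {G S : SimpleGraph V} {h k : ℕ}
    (hSG : S ≤ G) (hS : KHTrussProp S h k) :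
    ∃ T : SimpleGraph V, IsKHTruss G T h k ∧ S ≤ T := by
  classical
  have hfin : {T : SimpleGraph V | S ≤ T ∧ T ≤ G ∧ KHTrussProp T h k}.Finite :=
    Set.toFinite _
  have hne : {T : SimpleGraph V | S ≤ T ∧ T ≤ G ∧ KHTrussProp T h k}.Nonempty :=
    ⟨S, le_refl S, hSG, hS⟩
  obtain ⟨T, ⟨hST, hTG, hTp⟩, hmax⟩ := hfin.exists_maximal hne
  refine ⟨T, ⟨hTG, hTp, ?_⟩, hST⟩
  intro T' hT'G hT'p hTT'
  exact le_antisymm (hmax ⟨le_trans hST hTT', hT'G, hT'p⟩ hTT') hTT'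

lemma trussness_bddAbove (G : SimpleGraph V) (h : ℕ) (e : Sym2 V) :
    BddAbove {k | ∃ S : SimpleGraph V, IsKHTruss G S h k ∧ e ∈ S.edgeSet} := by
  refine ⟨Fintype.card V + 2, ?_⟩
  rintro k ⟨S, ⟨hSG, hprop, _⟩, heS⟩
  have h1 : k ≤ hSupport S h e + 2 := hprop e heS
  have h2 : hSupport S h e ≤ Fintype.card V := by
    unfold hSupport
    calc (commonHNbrs S h e).ncard ≤ (Set.univ : Set V).ncard :=
          Set.ncard_le_ncard (Set.subset_univ _) Set.finite_univ
      _ = Fintype.card V := by rw [Set.ncard_univ, Nat.card_eq_fintype_card]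
  omega

lemma le_trussness {G S : SimpleGraph V} {h k : ℕ}
    (hSG : S ≤ G) (hprop : KHTrussProp S h k) {e : Sym2 V} (he : e ∈ S.edgeSet) :
    k ≤ hTrussness G h e := by
  obtain ⟨T, hT, hST⟩ := exists_maximal_truss hSG hprop
  exact le_csSup (trussness_bddAbove G h e)
    ⟨T, hT, SimpleGraph.edgeSet_mono hST he⟩

lemma trussness_attained {G : SimpleGraph V} {h : ℕ} {e : Sym2 V}
    (he : e ∈ G.edgeSet) :
    ∃ S : SimpleGraph V, IsKHTruss G S h (hTrussness G h e) ∧ e ∈ S.edgeSet := by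
  apply Nat.sSup_mem ?_ (trussness_bddAbove G h e)
  obtain ⟨T, hT, hGT⟩ := exists_maximal_truss (le_refl G)
    (fun f _ => Nat.zero_le _ : KHTrussProp G h 0)
  exact ⟨0, T, hT, SimpleGraph.edgeSet_mono hGT he⟩

lemma trussness_eq_zero_of_not_edge {G : SimpleGraph V} {h : ℕ} {e : Sym2 V}
    (he : e ∉ G.edgeSet) : hTrussness G h e = 0 := by
  unfold hTrussness
  have : {k | ∃ S : SimpleGraph V, IsKHTruss G S h k ∧ e ∈ S.edgeSet} = ∅ := by
    ext k
    simp only [Set.mem_setOf_eq, Set.mem_empty_iff_false, iff_false]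
    rintro ⟨S, ⟨hSG, _, _⟩, heS⟩
    exact he (SimpleGraph.edgeSet_mono hSG heS)
  rw [this]
  exact csSup_empty

end TrussLemmas

section MainLemmas

variable {V : Type*} [Fintype V]

/-- Lower bound: the trussness minus 2 is a lower bound for every iterate. -/
lemma trussness_le_HSup (G : SimpleGraph V) (h : ℕ) (n : ℕ) :
    ∀ f : Sym2 V, hTrussness G h f - 2 ≤ HSup G h n f := by
  induction n with
  | zero =>
    intro f
    by_cases hf : f ∈ G.edgeSet
    · obtain ⟨S, ⟨hSG, hprop, _⟩, hfS⟩ := trussness_attained hf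
      have h1 : hTrussness G h f ≤ hSupport S h f + 2 := hprop f hfS
      have h2 : hSupport S h f ≤ hSupport G h f := hSupport_mono hSG h f
      show hTrussness G h f - 2 ≤ hSupport G h f
      omega
    · rw [trussness_eq_zero_of_not_edge hf]
      exact Nat.zero_le _
  | succ n ih =>
    intro f
    by_cases hf : f ∈ G.edgeSet
    · obtain ⟨S, ⟨hSG, hprop, _⟩, hfS⟩ := trussness_attained hf
      set k := hTrussness G h f with hk
      set c := k - 2 with hc
      show c ≤ hIndex ((commonHNbrs G h f).toFinite.toFinset.val.map
        (edgeKey G h (HSup G h n) f))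
      apply le_hIndex
      rw [← Multiset.countP_eq_card_filter, Multiset.countP_map]
      -- every common h-neighbor of f within S has edgeKey ≥ c
      have hkey : ∀ w ∈ commonHNbrs S h f, c ≤ edgeKey G h (HSup G h n) f w := by
        intro w hw
        apply le_edgeKey
        intro x hx
        obtain ⟨hwx, q, hq⟩ := hw x hx
        have hqe : ∀ f' ∈ q.edges, f' ∈ G.edgeSet := fun f' hf' =>
          SimpleGraph.edgeSet_mono hSG (q.edges_subset_edgeSet hf')
        have h0 : 0 < q.length := by
          rcases Nat.eq_zero_or_pos q.length with h0 | h0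
          · exact absurd (SimpleGraph.Walk.eq_of_length_eq_zero h0).symm hwx
          · exact h0
        refine le_pathKey_of_walk (q.transfer G hqe) ?_ ?_ _ ?_
        · rwa [SimpleGraph.Walk.length_transfer]
        · rwa [SimpleGraph.Walk.length_transfer]
        · intro f' hf'
          rw [SimpleGraph.Walk.edges_transfer] at hf'
          have hf'S : f' ∈ S.edgeSet := q.edges_subset_edgeSet hf'
          have hkf' : k ≤ hTrussness G h f' := le_trussness hSG hprop hf'S
          calc c = k - 2 := hc
            _ ≤ hTrussness G h f' - 2 := Nat.sub_le_sub_right hkf' 2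
            _ ≤ HSup G h n f' := ih f'
      -- counting
      have h1 : c ≤ (commonHNbrs S h f).ncard := by
        have h1' := hprop f hfS
        unfold hSupport at h1'
        omega
      have hsub : (commonHNbrs S h f).toFinite.toFinset ⊆
          ((commonHNbrs G h f).toFinite.toFinset.filter
            (fun w => c ≤ edgeKey G h (HSup G h n) f w)) := by
        intro w hw
        rw [Set.Finite.mem_toFinset] at hw
        rw [Finset.mem_filter, Set.Finite.mem_toFinset]
        exact ⟨commonHNbrs_mono hSG h f hw, hkey w hw⟩
      have h2 : (commonHNbrs S h f).ncard = (commonHNbrs S h f).toFinite.toFinset.card :=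
        Set.ncard_eq_toFinset_card _
      calc c ≤ (commonHNbrs S h f).toFinite.toFinset.card := h2 ▸ h1
        _ ≤ ((commonHNbrs G h f).toFinite.toFinset.filter
              (fun w => c ≤ edgeKey G h (HSup G h n) f w)).card :=
            Finset.card_le_card hsub
        _ = Multiset.card ((commonHNbrs G h f).toFinite.toFinset.val.filter
              (fun w => c ≤ edgeKey G h (HSup G h n) f w)) := by
            rw [← Finset.filter_val]; rfl
    · rw [trussness_eq_zero_of_not_edge hf]
      exact Nat.zero_le _

/-- The iterates are pointwise nonincreasing. -/
lemma HSup_succ_le (G : SimpleGraph V) (h : ℕ) (n : ℕ) :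
    ∀ f : Sym2 V, HSup G h (n + 1) f ≤ HSup G h n f := by
  induction n with
  | zero =>
    intro f
    show hIndex _ ≤ hSupport G h f
    calc hIndex ((commonHNbrs G h f).toFinite.toFinset.val.map
          (edgeKey G h (HSup G h 0) f))
        ≤ Multiset.card ((commonHNbrs G h f).toFinite.toFinset.val.map
          (edgeKey G h (HSup G h 0) f)) := hIndex_le_card _
      _ = (commonHNbrs G h f).toFinite.toFinset.card := by rw [Multiset.card_map]; rfl
      _ = hSupport G h f := (Set.ncard_eq_toFinset_card _).symm
  | succ n ih =>
    intro f
    show hIndex _ ≤ hIndex _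
    exact hIndex_map_mono _ _ _ (fun w _ =>
      edgeKey_mono (fun f' _ => ih f') f w)

lemma HSup_antitone (G : SimpleGraph V) (h : ℕ) {m n : ℕ} (hmn : m ≤ n)
    (f : Sym2 V) : HSup G h n f ≤ HSup G h m f := by
  induction n with
  | zero => rw [Nat.le_zero] at hmn; rw [hmn]
  | succ n ih =>
    rcases Nat.lt_or_ge m (n + 1) with hm | hm
    · exact le_trans (HSup_succ_le G h n f) (ih (Nat.lt_succ_iff.mp hm))
    · have : m = n + 1 := le_antisymm hmn hm
      rw [this]

/-- Global stabilization: there is an `N` past which all iterates agree, for all edges. -/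
lemma HSup_stabilizes (G : SimpleGraph V) (h : ℕ) [Nonempty V] :
    ∃ N : ℕ, ∀ f : Sym2 V, ∀ n, N ≤ n → HSup G h n f = HSup G h N f := by
  have key : ∀ f : Sym2 V, ∃ Nf : ℕ, ∀ n, Nf ≤ n → HSup G h n f = HSup G h Nf f := by
    intro f
    have hne : (Set.range (fun n => HSup G h n f)).Nonempty := ⟨HSup G h 0 f, 0, rfl⟩
    obtain ⟨Nf, hNf⟩ := Nat.sInf_mem hne
    have hNf' : HSup G h Nf f = sInf (Set.range (fun n => HSup G h n f)) := hNf
    refine ⟨Nf, fun n hn => le_antisymm (HSup_antitone G h hn f) ?_⟩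
    rw [hNf']
    exact Nat.sInf_le ⟨n, rfl⟩
  choose Nf hNf using key
  haveI : Nonempty (Sym2 V) := ⟨s(Classical.arbitrary V, Classical.arbitrary V)⟩
  obtain ⟨f0, hf0⟩ := Finite.exists_max Nf
  refine ⟨Nf f0, fun f n hn => ?_⟩
  rw [hNf f n (le_trans (hf0 f) hn), hNf f (Nf f0) (hf0 f)]

/-- Upper bound for a fixed point of the iteration. -/
lemma fixed_le_trussness (G : SimpleGraph V) (h : ℕ) (N : ℕ)
    (hfix : ∀ f : Sym2 V, HSup G h (N + 1) f = HSup G h N f)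
    (e : Sym2 V) (he : e ∈ G.edgeSet) :
    HSup G h N e ≤ hTrussness G h e - 2 := by
  rcases Nat.eq_zero_or_pos (HSup G h N e) with h0 | hpos
  · rw [h0]; exact Nat.zero_le _
  set c := HSup G h N e with hc
  -- the candidate subgraph: edges of G with value at least c
  set S' : SimpleGraph V :=
    { Adj := fun a b => G.Adj a b ∧ c ≤ HSup G h N s(a, b)
      symm := ⟨by
        intro a b hab
        refine ⟨hab.1.symm, ?_⟩
        rw [Sym2.eq_swap]
        exact hab.2⟩
      loopless := ⟨fun a ha => G.loopless.irrefl a ha.1⟩ } with hS'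
  have hS'G : S' ≤ G := fun _ _ hab => hab.1
  have hedge : ∀ f : Sym2 V, f ∈ S'.edgeSet ↔ f ∈ G.edgeSet ∧ c ≤ HSup G h N f := by
    intro f
    induction f using Sym2.ind with
    | _ x y => rw [SimpleGraph.mem_edgeSet, SimpleGraph.mem_edgeSet]
  have heS' : e ∈ S'.edgeSet := (hedge e).mpr ⟨he, le_refl c⟩
  -- S' satisfies the (c+2, h)-truss property
  have hprop : KHTrussProp S' h (c + 2) := by
    intro f hfS'
    obtain ⟨hfG, hcf⟩ := (hedge f).mp hfS'
    have hcf' : c ≤ hIndex ((commonHNbrs G h f).toFinite.toFinset.val.map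
        (edgeKey G h (HSup G h N) f)) := by
      calc c ≤ HSup G h N f := hcf
        _ = HSup G h (N + 1) f := (hfix f).symm
        _ = hIndex ((commonHNbrs G h f).toFinite.toFinset.val.map
            (edgeKey G h (HSup G h N) f)) := rfl
    have hcount := hIndex_spec _ _ hcf'
    rw [← Multiset.countP_eq_card_filter, Multiset.countP_map] at hcount
    -- each counted vertex is a common h-neighbor of f within S'
    have hkey : ∀ w ∈ commonHNbrs G h f, c ≤ edgeKey G h (HSup G h N) f w →
        w ∈ commonHNbrs S' h f := by
      intro w hw hcw x hx
      obtain ⟨hwx, -, -⟩ := hw x hx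
      refine ⟨hwx, ?_⟩
      have hpk : c ≤ pathKey G h (HSup G h N) x w :=
        le_trans hcw (edgeKey_le_pathKey G h (HSup G h N) f w hx)
      have hpos' : 0 < pathKey G h (HSup G h N) x w := lt_of_lt_of_le hpos hpk
      obtain ⟨p, hp0, hpl, hpe⟩ := pathKey_attained hpos'
      have hpe' : ∀ f' ∈ p.edges, f' ∈ S'.edgeSet := by
        intro f' hf'
        refine (hedge f').mpr ⟨p.edges_subset_edgeSet hf', ?_⟩
        exact le_trans hpk (hpe f' hf')
      exact ⟨p.transfer S' hpe', by rwa [SimpleGraph.Walk.length_transfer]⟩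
    have hsub : ((commonHNbrs G h f).toFinite.toFinset.filter
        (fun w => c ≤ edgeKey G h (HSup G h N) f w)) ⊆
        (commonHNbrs S' h f).toFinite.toFinset := by
      intro w hw
      rw [Finset.mem_filter, Set.Finite.mem_toFinset] at hw
      rw [Set.Finite.mem_toFinset]
      exact hkey w hw.1 hw.2
    have hfin : c ≤ hSupport S' h f := by
      calc c ≤ Multiset.card ((commonHNbrs G h f).toFinite.toFinset.val.filter
            (fun w => c ≤ edgeKey G h (HSup G h N) f w)) := hcount
        _ = ((commonHNbrs G h f).toFinite.toFinset.filter
            (fun w => c ≤ edgeKey G h (HSup G h N) f w)).card := by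
            rw [← Finset.filter_val]; rfl
        _ ≤ (commonHNbrs S' h f).toFinite.toFinset.card := Finset.card_le_card hsub
        _ = hSupport S' h f := (Set.ncard_eq_toFinset_card _).symm
    omega
  have hle := le_trussness hS'G hprop heS'
  omega

end MainLemmas

/-- Convergence: the sequence `H^(n)sup(e)` converges to `t(e,h) - 2`. -/
theorem HSup_tendsto_trussness {V : Type*} [Fintype V] (G : SimpleGraph V) (h : ℕ)
    (hh : 1 ≤ h) (e : Sym2 V) (he : e ∈ G.edgeSet) :
    ∃ N : ℕ, ∀ n, N ≤ n → HSup G h n e = hTrussness G h e - 2 := by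
  have : Nonempty V := ⟨(Quot.out e).1⟩
  obtain ⟨N, hN⟩ := HSup_stabilizes G h
  refine ⟨N, fun n hn => ?_⟩
  rw [hN e n hn]
  refine le_antisymm ?_ (trussness_le_HSup G h N e)
  exact fixed_le_trussness G h N (fun f => hN f (N + 1) (Nat.le_succ N)) e he
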